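/- If M is a numerical monoid (additive submonoid of the non-negative integers) with gcd d, and x ∈ M is nonzero, then the Apéry set Ap(M;x) = {m ∈ M : m − x ∉ M} has exactly x/d elements. -/

import Mathlib

/-! Reduction modulo `x` identifies `Ap(M;x)` with the image of `M` in `ZMod x`: two elements
of `Ap(M;x)` in the same residue class would differ by a positive multiple of `x`, putting the
larger one minus `x` back in `M`, while the least element of `M` in a residue class lies in
`Ap(M;x)`. In the finite group `ZMod x` the image of `M` is a submonoid, hence equal to the
subgroup it generates; as `M` generates `dℤ` in `ℤ`, this is the subgroup generated by `d`,
of order `x / d`. -/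

open AddSubgroup

def aperySet (M : AddSubmonoid ℕ) (x : ℕ) : Set ℕ :=
  {m | m ∈ M ∧ ¬(x ≤ m ∧ m - x ∈ M)}

theorem AddSubmonoid.mem_of_modEq_of_le {M : AddSubmonoid ℕ} {x a b : ℕ} (hx : x ∈ M)
    (ha : a ∈ M) (hab : a ≡ b [MOD x]) (hle : a ≤ b) : b ∈ M := by
  obtain ⟨k, hk⟩ := (Nat.modEq_iff_dvd' hle).mp hab
  rw [← Nat.add_sub_cancel' hle, hk]
  exact M.add_mem ha (by simpa [mul_comm] using M.nsmul_mem hx k)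

namespace aperySet

variable {M : AddSubmonoid ℕ} {x : ℕ}

theorem injOn_natCast (hx : x ∈ M) : Set.InjOn (Nat.cast : ℕ → ZMod x) (aperySet M x) := by
  suffices ∀ a ∈ aperySet M x, ∀ b ∈ aperySet M x, a ≡ b [MOD x] → a ≤ b → a = b by
    intro a ha b hb hab
    rw [ZMod.natCast_eq_natCast_iff] at hab
    rcases le_total a b with h | h
    · exact this a ha b hb hab h
    · exact (this b hb a ha hab.symm h).symm
  intro a ha b hb hab hle
  by_contra hne
  have hgap : x ≤ b - a := Nat.le_of_dvd (by omega) ((Nat.modEq_iff_dvd' hle).mp hab)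
  have hxb : x ≤ b := by omega
  exact hb.2 ⟨hxb, M.mem_of_modEq_of_le hx ha.1 ((Nat.modEq_sub_modulus_iff hxb).mpr hab)
    (by omega)⟩

theorem exists_modEq (hx0 : x ≠ 0) {m : ℕ} (hm : m ∈ M) :
    ∃ a ∈ aperySet M x, a ≡ m [MOD x] := by
  induction m using Nat.strong_induction_on with
  | _ m ih =>
    by_cases hmAp : m ∈ aperySet M x
    · exact ⟨m, hmAp, rfl⟩
    · have ⟨hxm, hmx⟩ : x ≤ m ∧ m - x ∈ M := by simpa [aperySet, hm] using hmAp
      obtain ⟨a, ha, hmod⟩ := ih (m - x) (by omega) hmx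
      exact ⟨a, ha, (Nat.modEq_sub_modulus_iff hxm).mp hmod⟩

theorem image_natCast (hx0 : x ≠ 0) :
    (Nat.cast : ℕ → ZMod x) '' aperySet M x = Nat.cast '' (M : Set ℕ) := by
  refine subset_antisymm (Set.image_mono fun m hm => hm.1) ?_
  rintro _ ⟨m, hm, rfl⟩
  obtain ⟨a, ha, hmod⟩ := exists_modEq hx0 hm
  exact ⟨a, ha, (ZMod.natCast_eq_natCast_iff _ _ _).mpr hmod⟩

end aperySet

theorem closure_natCast_image_eq_zmultiples {S : Set ℕ} {d : ℕ} (hd_dvd : ∀ m ∈ S, d ∣ m)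
    (hd_gcd : ∀ c : ℕ, (∀ m ∈ S, c ∣ m) → c ∣ d) :
    AddSubgroup.closure ((Nat.cast : ℕ → ℤ) '' S) = zmultiples (d : ℤ) := by
  obtain ⟨g, hg⟩ := Int.subgroup_cyclic (AddSubgroup.closure ((Nat.cast : ℕ → ℤ) '' S))
  rw [← zmultiples_eq_closure, ← Int.zmultiples_natAbs] at hg
  refine le_antisymm ((closure_le _).mpr ?_) (zmultiples_le.mpr ?_)
  · rintro _ ⟨m, hm, rfl⟩
    exact Int.mem_zmultiples_iff.mpr (Int.natCast_dvd_natCast.mpr (hd_dvd m hm))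
  · rw [hg, Int.mem_zmultiples_iff, Int.natCast_dvd_natCast]
    refine hd_gcd _ fun m hm => ?_
    have : (m : ℤ) ∈ zmultiples (g.natAbs : ℤ) := hg ▸ subset_closure ⟨m, hm, rfl⟩
    exact Int.natCast_dvd_natCast.mp (Int.mem_zmultiples_iff.mp this)

theorem AddSubgroup.coe_closure_addSubmonoid_of_finite {G : Type*} [AddGroup G] [Finite G]
    (T : AddSubmonoid G) : (AddSubgroup.closure (T : Set G) : Set G) = T := by
  rw [← coe_toAddSubmonoid, closure_toAddSubmonoid_of_finite, AddSubmonoid.closure_eq]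

theorem natCast_image_eq_zmultiples {M : AddSubmonoid ℕ} {d : ℕ} (hd_dvd : ∀ m ∈ M, d ∣ m)
    (hd_gcd : ∀ c : ℕ, (∀ m ∈ M, c ∣ m) → c ∣ d) {x : ℕ} (hx0 : x ≠ 0) :
    (Nat.cast : ℕ → ZMod x) '' M = zmultiples (d : ZMod x) := by
  have : NeZero x := ⟨hx0⟩
  have hcast : ((Nat.cast : ℕ → ZMod x) '' M) = Int.castAddHom (ZMod x) '' (Nat.cast '' M) := by
    rw [Set.image_image]; simp
  rw [← Nat.coe_castAddMonoidHom, ← AddSubmonoid.coe_map,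
    ← AddSubgroup.coe_closure_addSubmonoid_of_finite,
    AddSubmonoid.coe_map, Nat.coe_castAddMonoidHom, hcast, ← AddMonoidHom.map_closure,
    closure_natCast_image_eq_zmultiples hd_dvd hd_gcd, AddMonoidHom.map_zmultiples]
  simp

/-- If `M` is a numerical monoid (additive submonoid of `ℕ`) with gcd `d`,
and `x ∈ M` is nonzero, then the Apéry set `Ap(M;x) = {m ∈ M : m − x ∉ M}`
(where `m - x` is taken in `ℤ`, encoded by the guard `x ≤ m`) has exactly `x / d` elements. -/
theorem apery_ncard (M : AddSubmonoid ℕ) (d : ℕ)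
    (hd_dvd : ∀ m ∈ M, d ∣ m)
    (hd_gcd : ∀ c : ℕ, (∀ m ∈ M, c ∣ m) → c ∣ d)
    (x : ℕ) (hx : x ∈ M) (hx0 : x ≠ 0) :
    Set.ncard {m : ℕ | m ∈ M ∧ ¬(x ≤ m ∧ m - x ∈ M)} = x / d := by
  change (aperySet M x).ncard = x / d
  calc (aperySet M x).ncard = ((Nat.cast : ℕ → ZMod x) '' aperySet M x).ncard :=
        (aperySet.injOn_natCast hx).ncard_image.symm
    _ = Nat.card (zmultiples (d : ZMod x)) := by
        rw [aperySet.image_natCast hx0, natCast_image_eq_zmultiples hd_dvd hd_gcd hx0]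
        exact (Nat.card_coe_set_eq _).symm
    _ = x / d := by
        rw [Nat.card_zmultiples, ZMod.addOrderOf_coe _ hx0, Nat.gcd_eq_right (hd_dvd x hx)]
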